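/- In the UQ-F gadget, modeled as a composition of gates A_1 (AUT), S_1 (Selector), S_2 (Selector), and A_2 (AUT), where the traverse path of A_1 leads into the close path of S_1, the invariant holds: after any sequence of legal inputs starting from an initial state where A_1 and S_1 are in the same position, A_1 is open if and only if S_1 is open. -/
import Mathlib


/-- Joint state of the gates `A_1` (an AUT gate) and `S_1` (a Selector gate)
inside the UQ-F gadget: `a1` (resp. `s1`) is `true` iff the gate is open
(select-left). The other gates `S_2`, `A_2` do not affect this pair. -/
structure UQFState where
  a1 : Bool
  s1 : Bool
deriving DecidableEq

/-- The inputs of the gadget that are relevant to `A_1` and `S_1`: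
`traverseA1` fires a bird into `A_1`'s traverse path — if `A_1` is open the
bird traverses it (closing `A_1`) and, since `A_1`'s traverse path leads
into the close path of `S_1`, it immediately closes `S_1`; if `A_1` is
closed nothing changes.  `openBoth` is the (simultaneously wired) open
input `L_I` to both `A_1` and `S_1`, opening both.  No other input of the
gadget affects the states of `A_1` or `S_1`. -/
inductive UQFInput | traverseA1 | openBoth
deriving DecidableEq

open UQFInput

/-- Transition function of the `A_1`/`S_1` subsystem of the UQ-F gadget. -/
def uqfStep (st : UQFState) : UQFInput → UQFState
  | traverseA1 => if st.a1 then ⟨false, false⟩ else st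
  | openBoth => ⟨true, true⟩

/-- Invariant of the UQ-F gadget: starting from any initial state in which
`A_1` and `S_1` are in the same position, after any sequence of legal
inputs, `A_1` is open if and only if `S_1` is open. -/
theorem stmt_5 (init : UQFState) (h : init.a1 = init.s1) (l : List UQFInput) :
    (l.foldl uqfStep init).a1 = (l.foldl uqfStep init).s1 := by
  induction l generalizing init with
  | nil => exact h
  | cons x xs ih =>
    cases x <;> simp only [List.foldl, uqfStep] <;> apply ih
    · split <;> simp [h]
    · rfl
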